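/- For a parking-function word p ∈ [m]^n with an integer-coordinate fixed point, the two inversion algorithms agree: the function U produced by the Gorsky–Mazin–Vazirani placement algorithm equals the function V produced by the iterated-multiset algorithm (starting from S_0 = {0,1,...,m-1} and setting V(i) = S_i[p(i)], S_{i+1} = (S_i \ {V(i)}) ∪ {V(i) + m}), i.e., U(i) = V(i) for all i ≥ 0. -/

import Mathlib

/-- The multiset algorithm: `SAlg m p i` is the size-`m` set `S_i`, starting from
`S_0 = {0, 1, …, m-1}`; at step `i` the `(p i + 1)`-st smallest element `V(i)` of
`S_i` is replaced by `V(i) + m`. -/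
def SAlg (m : ℕ) (p : ℕ → ℕ) : ℕ → Finset ℕ
  | 0 => Finset.range m
  | i+1 =>
      let v := ((SAlg m p i).sort (· ≤ ·)).getD (p i) 0
      insert (v + m) ((SAlg m p i).erase v)

/-- `VAlg m p i = S_i[p i]`, the value output by the iterated-multiset algorithm
at position `i`. -/
def VAlg (m : ℕ) (p : ℕ → ℕ) (i : ℕ) : ℕ :=
  ((SAlg m p i).sort (· ≤ ·)).getD (p i) 0

/-- `W` satisfies the Gorsky–Mazin–Vazirani placement specification, where
`W α = U⁻¹(α)` is the position at which the value `α` is placed: `α` goes to the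
leftmost position `i` that is unoccupied by smaller values, lies to the right of
the position of `α - m`, and satisfies
`p i = #{β : α - m < β < α, U⁻¹(β) > i}`. -/
def GMVSpec (m : ℕ) (p : ℕ → ℕ) (W : ℕ → ℕ) : Prop :=
  ∀ α : ℕ, IsLeast {i : ℕ |
    (∀ β < α, W β ≠ i) ∧
    (∀ β : ℕ, β + m = α → W β < i) ∧
    p i = ((Finset.range α).filter
      (fun β : ℕ => (α : ℤ) - (m : ℤ) < (β : ℤ) ∧ i < W β)).card} (W α)

/-!
Write `Uᵢ = {V j | j < i}`. By induction, `Sᵢ` consists of the least element outside `Uᵢ` of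
each residue class mod `m`, and `Uᵢ` is closed under subtracting `m`. If `W` inverts `V` before
step `i`, then `Uᵢ = {β | W β < i}`, and the GMV conditions on `γ = W⁻¹ i` say that `γ ∈ Sᵢ`
and that exactly `p i` values of the window `(γ - m, γ)` lie outside `Uᵢ`. Lifting each
`a ∈ Sᵢ` below `γ` into that window along its residue class is a bijection onto those values,
so `γ` is the `(p i + 1)`-st smallest element of `Sᵢ`, i.e. `γ = V i`.
-/

open Finset

def SubClosed (m : ℕ) (U : Finset ℕ) : Prop :=
  ∀ α, α + m ∈ U → α ∈ U

-- For `SubClosed m U`, these are the least elements outside `U` of the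
-- residue classes mod `m`.
def MinOutside (m : ℕ) (U : Finset ℕ) (α : ℕ) : Prop :=
  α ∉ U ∧ ∀ β, β + m = α → β ∈ U

namespace MinOutside

variable {m a b : ℕ} {U : Finset ℕ}

theorem pos (ha : MinOutside m U a) : 0 < m :=
  Nat.pos_of_ne_zero fun h => ha.1 (ha.2 a (by rw [h, add_zero]))

theorem notMem_of_le_of_modEq (hU : SubClosed m U) (ha : MinOutside m U a)
    (hab : a ≤ b) (hmod : a ≡ b [MOD m]) : b ∉ U := by
  obtain ⟨k, hk⟩ := (Nat.modEq_iff_dvd' hab).mp hmod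
  obtain rfl : b = a + m * k := by omega
  clear hk hab hmod
  induction k with
  | zero => exact ha.1
  | succ k ih => exact fun h => ih (hU _ (by rwa [mul_add_one, ← add_assoc] at h))

theorem eq_of_modEq (hU : SubClosed m U) (ha : MinOutside m U a)
    (hb : MinOutside m U b) (hmod : a ≡ b [MOD m]) : a = b := by
  wlog hab : a ≤ b generalizing a b
  · exact (this hb ha hmod.symm (by omega)).symm
  by_contra hne
  obtain ⟨k, hk⟩ := (Nat.modEq_iff_dvd' hab).mp hmod
  obtain ⟨j, rfl⟩ := Nat.exists_eq_succ_of_ne_zero (show k ≠ 0 by rintro rfl; omega)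
  rw [Nat.succ_eq_add_one, mul_add_one] at hk
  exact ha.notMem_of_le_of_modEq hU (Nat.le_add_right a (m * j))
    (Nat.add_mul_mod_self_left a m j).symm (hb.2 _ (by omega))

end MinOutside

theorem exists_minOutside_le_modEq {m b : ℕ} {U : Finset ℕ} (hm : 0 < m) (hb : b ∉ U) :
    ∃ a, MinOutside m U a ∧ a ≤ b ∧ a ≡ b [MOD m] := by
  induction b using Nat.strong_induction_on with
  | _ b ih =>
  by_cases hmin : ∀ β, β + m = b → β ∈ U
  · exact ⟨b, ⟨hb, hmin⟩, le_rfl, rfl⟩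
  push Not at hmin
  obtain ⟨β, rfl, hβ⟩ := hmin
  obtain ⟨a, ha, haβ, hmod⟩ := ih β (by omega) hβ
  exact ⟨a, ha, by omega, hmod.trans (Nat.add_mod_right β m).symm⟩

theorem minOutside_insert_iff {m v α : ℕ} {U : Finset ℕ} (hU : SubClosed m U)
    (hv : MinOutside m U v) :
    MinOutside m (insert v U) α ↔ α = v + m ∨ α ≠ v ∧ MinOutside m U α := by
  have hm := hv.pos
  simp only [MinOutside, mem_insert]
  constructor
  · rintro ⟨hα, hpred⟩
    by_cases hαv : α = v + m
    · exact Or.inl hαv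
    · push Not at hα
      exact Or.inr ⟨hα.1, hα.2, fun β hβ => (hpred β hβ).resolve_left (by omega)⟩
  · rintro (rfl | ⟨hαv, hα, hpred⟩)
    · exact ⟨not_or.mpr ⟨by omega, fun h => hv.1 (hU v h)⟩, fun β hβ => Or.inl (by omega)⟩
    · exact ⟨not_or.mpr ⟨hαv, hα⟩, fun β hβ => Or.inr (hpred β hβ)⟩

theorem subClosed_insert {m v : ℕ} {U : Finset ℕ} (hU : SubClosed m U)
    (hv : MinOutside m U v) : SubClosed m (insert v U) := by
  simp only [SubClosed, mem_insert]
  rintro α (h | h)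
  · exact Or.inr (hv.2 α h)
  · exact Or.inr (hU α h)

theorem card_filter_lt_eq_card_window {m γ : ℕ} {S U : Finset ℕ} (hU : SubClosed m U)
    (hS : ∀ a, a ∈ S ↔ MinOutside m U a) (hγ : γ ∈ S) :
    #{a ∈ S | a < γ} = #{β ∈ range γ | γ < β + m ∧ β ∉ U} := by
  have hγ' := (hS γ).mp hγ
  have hm := hγ'.pos
  -- lift `a` into the window `(γ - m, γ)` along its residue class
  refine card_bij (fun a _ => a + m * ((γ - 1 - a) / m)) ?_ ?_ ?_
  · intro a ha
    rw [mem_filter, hS] at ha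
    obtain ⟨ha, haγ⟩ := ha
    have hdiv := Nat.div_add_mod (γ - 1 - a) m
    have hmod := Nat.mod_lt (γ - 1 - a) hm
    have hne : a + m * ((γ - 1 - a) / m) + m ≠ γ := by
      intro h
      have : a ≡ γ [MOD m] := by
        rw [← h, add_assoc, ← mul_add_one]
        exact (Nat.add_mul_mod_self_left a m _).symm
      exact absurd (ha.eq_of_modEq hU hγ' this) (by omega)
    simp only [mem_filter, mem_range]
    refine ⟨by omega, by omega, ?_⟩
    exact ha.notMem_of_le_of_modEq hU (Nat.le_add_right _ _) (Nat.add_mul_mod_self_left a m _).symm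
  · intro a₁ ha₁ a₂ ha₂ h
    rw [mem_filter, hS] at ha₁ ha₂
    refine ha₁.1.eq_of_modEq hU ha₂.1 ?_
    simpa only [Nat.ModEq, Nat.add_mul_mod_self_left] using congrArg (· % m) h
  · intro β hβ
    simp only [mem_filter, mem_range] at hβ
    obtain ⟨hβγ, hγβ, hβU⟩ := hβ
    obtain ⟨a, ha, haβ, hmod⟩ := exists_minOutside_le_modEq hm hβU
    obtain ⟨k, hk⟩ := (Nat.modEq_iff_dvd' haβ).mp hmod
    have hq : (γ - 1 - a) / m = k := by
      rw [show γ - 1 - a = γ - 1 - β + m * k by omega, Nat.add_mul_div_left _ _ hm,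
        Nat.div_eq_of_lt (by omega), zero_add]
    exact ⟨a, mem_filter.mpr ⟨(hS a).mpr ha, by omega⟩, by simp only [hq]; omega⟩

theorem getD_sort_eq_nth (s : Finset ℕ) (k : ℕ) :
    (s.sort (· ≤ ·)).getD k 0 = Nat.nth (· ∈ s) k := by
  rw [Nat.nth_eq_getD_sort (p := (· ∈ s)) s.finite_toSet]
  simp

theorem getD_sort_mem {s : Finset ℕ} {k : ℕ} (hk : k < #s) :
    (s.sort (· ≤ ·)).getD k 0 ∈ s := by
  rw [getD_sort_eq_nth]
  exact Nat.nth_mem_of_lt_card (p := (· ∈ s)) s.finite_toSet (by simpa using hk)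

theorem getD_sort_card_filter_lt {s : Finset ℕ} {γ : ℕ} (hγ : γ ∈ s) :
    (s.sort (· ≤ ·)).getD #{x ∈ s | x < γ} 0 = γ := by
  have : #{x ∈ s | x < γ} = Nat.count (· ∈ s) γ := by
    rw [Nat.count_eq_card_filter_range]
    congr 1
    ext x
    simp [and_comm]
  rw [getD_sort_eq_nth, this, Nat.nth_count hγ]

def placed (m : ℕ) (p : ℕ → ℕ) (i : ℕ) : Finset ℕ :=
  (range i).image (VAlg m p)

section SAlg

variable {m : ℕ} {p : ℕ → ℕ}

theorem SAlg_succ (i : ℕ) :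
    SAlg m p (i + 1) = insert (VAlg m p i + m) ((SAlg m p i).erase (VAlg m p i)) :=
  rfl

theorem placed_succ (i : ℕ) : placed m p (i + 1) = insert (VAlg m p i) (placed m p i) := by
  rw [placed, range_add_one, image_insert, placed]

theorem SAlg_invariant (hlt : ∀ i, p i < m) (i : ℕ) :
    #(SAlg m p i) = m ∧ (∀ α, α ∈ SAlg m p i ↔ MinOutside m (placed m p i) α) ∧
      SubClosed m (placed m p i) := by
  induction i with
  | zero =>
    refine ⟨card_range m, fun α => ?_, fun α => by simp [placed]⟩
    simp only [SAlg, placed, MinOutside, mem_range, range_zero, image_empty, notMem_empty,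
      not_false_eq_true, true_and]
    exact ⟨fun h β hβ => by omega, fun h => not_le.mp fun hα => h (α - m) (by omega)⟩
  | succ i ih =>
    obtain ⟨hcard, hmem, hU⟩ := ih
    have hv : VAlg m p i ∈ SAlg m p i := getD_sort_mem (hcard.symm ▸ hlt i)
    have hv' := (hmem _).mp hv
    have hvm : VAlg m p i + m ∉ (SAlg m p i).erase (VAlg m p i) :=
      fun h => hv'.1 (((hmem _).mp (mem_of_mem_erase h)).2 _ rfl)
    refine ⟨?_, fun α => ?_, ?_⟩
    · rw [SAlg_succ, card_insert_of_notMem hvm, card_erase_of_mem hv, hcard,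
        Nat.sub_add_cancel hv'.pos]
    · rw [SAlg_succ, placed_succ, minOutside_insert_iff hU hv', mem_insert, mem_erase, hmem]
    · rw [placed_succ]
      exact subClosed_insert hU hv'

end SAlg

theorem algorithms_agree_general (m : ℕ)
    (p : ℕ → ℕ) (hlt : ∀ i, p i < m)
    (W : ℕ → ℕ) (hWbij : Function.Bijective W) (hW : GMVSpec m p W) :
    ∀ i : ℕ, W (VAlg m p i) = i := by
  intro i
  induction i using Nat.strong_induction_on with
  | _ i ih =>
  obtain ⟨-, hmem, hU⟩ := SAlg_invariant hlt i
  have hplaced : ∀ β, β ∈ placed m p i ↔ W β < i := fun β => by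
    simp only [placed, mem_image, mem_range]
    constructor
    · rintro ⟨j, hj, rfl⟩
      rwa [ih j hj]
    · exact fun hβ => ⟨W β, hβ, hWbij.1 (ih (W β) hβ)⟩
  obtain ⟨γ, rfl⟩ := hWbij.2 i
  obtain ⟨-, hprev, hcount⟩ := (hW γ).1
  have hγ : γ ∈ SAlg m p (W γ) :=
    (hmem γ).mpr ⟨by rw [hplaced]; exact lt_irrefl _, fun β hβ => (hplaced β).mpr (hprev β hβ)⟩
  have hwindow : #{a ∈ SAlg m p (W γ) | a < γ} = p (W γ) := by
    rw [card_filter_lt_eq_card_window hU hmem hγ, hcount]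
    congr 1
    refine filter_congr fun β hβ => ?_
    rw [mem_range] at hβ
    have : W β ≠ W γ := fun h => (hWbij.1 h ▸ hβ).false
    rw [hplaced]
    omega
  rw [VAlg, ← hwindow, getD_sort_card_filter_lt hγ]

/-- For an `n`-periodic parking-function word `p` in `[m]` (containing a `0`), the
GMV placement algorithm and the iterated-multiset algorithm agree:
`U(i) = V(i)` for all `i`, i.e. `W (V i) = i` where `W = U⁻¹`. -/
theorem algorithms_agree (m n : ℕ) (hm : 0 < m) (hn : 0 < n)
    (p : ℕ → ℕ) (hlt : ∀ i, p i < m) (hper : ∀ i, p (i + n) = p i)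
    (hzero : ∃ i < n, p i = 0)
    (hpark : ∀ i : ℕ, 1 ≤ i → i ≤ m →
      i * n ≤ ((Finset.range n).filter (fun j => p j < i)).card * m)
    (W : ℕ → ℕ) (hWbij : Function.Bijective W) (hW : GMVSpec m p W) :
    ∀ i : ℕ, W (VAlg m p i) = i :=
  algorithms_agree_general m p hlt W hWbij hW
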